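/- arXiv:2601.09940 — 4 statements merged into one kernel-verified Lean document; each statement's English description precedes it below -/
import Mathlib

section
/- Let G be a semigroup, let 𝒮 be a Schur ring over G, and let X ⊆ G be an 𝒮-subset. Then the subsemigroup of G generated by X (i.e., Subsemigroup.closure X, equal to the union of the sets X^n of n-fold products of elements of X) is an 𝒮-subset, and the smallest two-sided ideal of G containing X, namely X ∪ G·X ∪ X·G ∪ G·X·G, is an 𝒮-subset. -/
open scoped Pointwise
open scoped Classical

/-- The simple quantity `[X] = ∑_{x ∈ X} x` in the semigroup algebra `MonoidAlgebra ℚ G`. -/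
noncomputable def simpleQty {G : Type*} [Mul G] (X : Finset G) : MonoidAlgebra ℚ G :=
  ∑ x ∈ X, MonoidAlgebra.single x (1 : ℚ)

/-- A partition of `G` into nonempty finite blocks. -/
def IsPartition {G : Type*} (S : Set (Set G)) : Prop :=
  (∀ X ∈ S, X.Nonempty ∧ X.Finite) ∧ ∀ x : G, ∃! X, X ∈ S ∧ x ∈ X

/-- The ℚ-linear span of the simple quantities of the blocks of `S`. -/
noncomputable def schurSpan {G : Type*} [Mul G] (S : Set (Set G)) :
    Submodule ℚ (MonoidAlgebra ℚ G) :=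
  Submodule.span ℚ { z | ∃ X ∈ S, ∃ hX : X.Finite, z = simpleQty hX.toFinset }

/-- A Schur ring over the semigroup `G`. -/
def IsSchurRing {G : Type*} [Semigroup G] (S : Set (Set G)) : Prop :=
  IsPartition S ∧ ∀ X ∈ S, ∀ Y ∈ S, ∀ (hX : X.Finite) (hY : Y.Finite),
    simpleQty hX.toFinset * simpleQty hY.toFinset ∈ schurSpan S

/-- `A` is an `S`-subset: a union of blocks of `S`. -/
def IsSUnion {G : Type*} (S : Set (Set G)) (A : Set G) : Prop :=
  ∀ X ∈ S, X ⊆ A ∨ X ∩ A = ∅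

lemma simpleQty_apply {G : Type*} [Mul G] (F : Finset G) (g : G) :
    (simpleQty F).coeff g = if g ∈ F then (1 : ℚ) else 0 := by
  classical
  unfold simpleQty
  rw [MonoidAlgebra.coeff_sum, Finsupp.finset_sum_apply]
  simp [MonoidAlgebra.coeff_single, Finsupp.single_apply, Finset.sum_ite_eq']

lemma simpleQty_mul_apply {G : Type*} [Semigroup G] (FX FY : Finset G) (g : G) :
    (simpleQty FX * simpleQty FY).coeff g
      = ∑ x ∈ FX, ∑ y ∈ FY, if x * y = g then (1 : ℚ) else 0 := by
  classical
  unfold simpleQty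
  rw [Finset.sum_mul_sum]
  simp only [MonoidAlgebra.single_mul_single, one_mul]
  rw [MonoidAlgebra.coeff_sum, Finsupp.finset_sum_apply]
  refine Finset.sum_congr rfl fun x _ => ?_
  rw [MonoidAlgebra.coeff_sum, Finsupp.finset_sum_apply]
  refine Finset.sum_congr rfl fun y _ => ?_
  simp [MonoidAlgebra.coeff_single, Finsupp.single_apply]

lemma prod_apply_ne_zero_iff {G : Type*} [Semigroup G] (FX FY : Finset G) (g : G) :
    (simpleQty FX * simpleQty FY).coeff g ≠ 0 ↔ ∃ x ∈ FX, ∃ y ∈ FY, x * y = g := by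
  classical
  rw [simpleQty_mul_apply]
  constructor
  · intro h
    by_contra hc
    push_neg at hc
    apply h
    refine Finset.sum_eq_zero fun x hx => Finset.sum_eq_zero fun y hy => ?_
    simp [hc x hx y hy]
  · rintro ⟨x, hx, y, hy, hxy⟩
    have hpos : 0 < ∑ x ∈ FX, ∑ y ∈ FY, if x * y = g then (1 : ℚ) else 0 := by
      refine Finset.sum_pos' (fun i _ => Finset.sum_nonneg fun j _ => ?_) ⟨x, hx, ?_⟩
      · positivity
      · refine Finset.sum_pos' (fun j _ => ?_) ⟨y, hy, ?_⟩
        · positivity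
        · simp [hxy]
    exact ne_of_gt hpos

lemma span_const_on_blocks {G : Type*} [Semigroup G] (S : Set (Set G))
    (hP : IsPartition S) {z : MonoidAlgebra ℚ G} (hz : z ∈ schurSpan S)
    {C : Set G} (hC : C ∈ S) {g g' : G} (hg : g ∈ C) (hg' : g' ∈ C) :
    z.coeff g = z.coeff g' := by
  classical
  induction hz using Submodule.span_induction with
  | mem x hx =>
      obtain ⟨X, hX, hXf, rfl⟩ := hx
      rw [simpleQty_apply, simpleQty_apply]
      have key : (g ∈ X) ↔ (g' ∈ X) := by
        constructor
        · intro h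
          have := (hP.2 g).unique ⟨hC, hg⟩ ⟨hX, h⟩
          subst this; exact hg'
        · intro h
          have := (hP.2 g').unique ⟨hC, hg'⟩ ⟨hX, h⟩
          subst this; exact hg
      simp only [Set.Finite.mem_toFinset]
      by_cases h : g ∈ X
      · rw [if_pos h, if_pos (key.mp h)]
      · rw [if_neg h, if_neg (fun h' => h (key.mpr h'))]
  | zero => simp
  | add a b _ _ ha hb => show (a + b).coeff g = (a + b).coeff g'; rw [MonoidAlgebra.coeff_add, Finsupp.add_apply, Finsupp.add_apply, ha, hb]
  | smul c a _ ha => show (c • a).coeff g = (c • a).coeff g'; rw [MonoidAlgebra.coeff_smul, Finsupp.smul_apply, Finsupp.smul_apply, ha]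

/-- Key lemma: product of two blocks is an S-union. -/
lemma block_mul_block {G : Type*} [Semigroup G] (S : Set (Set G))
    (hS : IsSchurRing S) {X Y : Set G} (hX : X ∈ S) (hY : Y ∈ S) :
    IsSUnion S (X * Y) := by
  classical
  obtain ⟨hXne, hXf⟩ := hS.1.1 X hX
  obtain ⟨hYne, hYf⟩ := hS.1.1 Y hY
  have hmem := hS.2 X hX Y hY hXf hYf
  intro C hC
  by_cases h : C ∩ (X * Y) = ∅
  · exact Or.inr h
  · left
    obtain ⟨g0, hg0C, hg0⟩ := Set.nonempty_iff_ne_empty.mpr h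
    intro g hg
    have hzg := span_const_on_blocks S hS.1 hmem hC hg hg0C
    have hne : (simpleQty hXf.toFinset * simpleQty hYf.toFinset).coeff g0 ≠ 0 := by
      rw [prod_apply_ne_zero_iff]
      obtain ⟨x, hx, y, hy, hxy⟩ := hg0
      exact ⟨x, hXf.mem_toFinset.mpr hx, y, hYf.mem_toFinset.mpr hy, hxy⟩
    have : (simpleQty hXf.toFinset * simpleQty hYf.toFinset).coeff g ≠ 0 := by
      rw [hzg]; exact hne
    rw [prod_apply_ne_zero_iff] at this
    obtain ⟨x, hx, y, hy, hxy⟩ := this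
    exact ⟨x, hXf.mem_toFinset.mp hx, y, hYf.mem_toFinset.mp hy, hxy⟩

lemma sUnion_mul {G : Type*} [Semigroup G] (S : Set (Set G)) (hS : IsSchurRing S)
    {A B : Set G} (hA : IsSUnion S A) (hB : IsSUnion S B) : IsSUnion S (A * B) := by
  intro C hC
  by_cases h : C ∩ (A * B) = ∅
  · exact Or.inr h
  · left
    obtain ⟨g0, hg0C, a, ha, b, hb, hab⟩ := Set.nonempty_iff_ne_empty.mpr h
    obtain ⟨X, ⟨hX, haX⟩, _⟩ := hS.1.2 a
    obtain ⟨Y, ⟨hY, hbY⟩, _⟩ := hS.1.2 b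
    have hXA : X ⊆ A := (hA X hX).resolve_right (fun he => Set.eq_empty_iff_forall_notMem.mp he a ⟨haX, ha⟩)
    have hYB : Y ⊆ B := (hB Y hY).resolve_right (fun he => Set.eq_empty_iff_forall_notMem.mp he b ⟨hbY, hb⟩)
    have hCXY : C ⊆ X * Y := by
      rcases block_mul_block S hS hX hY C hC with h1 | h1
      · exact h1
      · exact absurd (Set.eq_empty_iff_forall_notMem.mp h1 g0 ⟨hg0C, ⟨a, haX, b, hbY, hab⟩⟩) (fun q => q)
    exact hCXY.trans (Set.mul_subset_mul hXA hYB)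

lemma sUnion_union {G : Type*} (S : Set (Set G)) {A B : Set G}
    (hA : IsSUnion S A) (hB : IsSUnion S B) : IsSUnion S (A ∪ B) := by
  intro C hC
  rcases hA C hC with h1 | h1
  · exact Or.inl (h1.trans Set.subset_union_left)
  rcases hB C hC with h2 | h2
  · exact Or.inl (h2.trans Set.subset_union_right)
  · right
    rw [Set.inter_union_distrib_left, h1, h2, Set.union_empty]

lemma sUnion_iUnion {G : Type*} (S : Set (Set G)) {ι : Type*} {A : ι → Set G}
    (hA : ∀ i, IsSUnion S (A i)) : IsSUnion S (⋃ i, A i) := by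
  intro C hC
  by_cases h : C ∩ (⋃ i, A i) = ∅
  · exact Or.inr h
  · left
    obtain ⟨g0, hg0C, hg0⟩ := Set.nonempty_iff_ne_empty.mpr h
    obtain ⟨i, hi⟩ := Set.mem_iUnion.mp hg0
    have : C ⊆ A i := (hA i C hC).resolve_right
      (fun he => Set.eq_empty_iff_forall_notMem.mp he g0 ⟨hg0C, hi⟩)
    exact this.trans (Set.subset_iUnion A i)

lemma sUnion_univ {G : Type*} (S : Set (Set G)) : IsSUnion S (Set.univ : Set G) :=
  fun _ _ => Or.inl (Set.subset_univ _)

/-- iterated powers of A: `powA A n = A^(n+1)` -/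
def powA {G : Type*} [Semigroup G] (A : Set G) : ℕ → Set G
  | 0 => A
  | n + 1 => powA A n * A

lemma powA_mul {G : Type*} [Semigroup G] (A : Set G) (m n : ℕ) :
    powA A m * powA A n ⊆ powA A (m + n + 1) := by
  induction n with
  | zero => exact subset_of_eq rfl
  | succ n ih =>
      have : powA A m * powA A (n + 1) = (powA A m * powA A n) * A := by
        show powA A m * (powA A n * A) = _
        rw [mul_assoc]
      rw [this]
      calc (powA A m * powA A n) * A ⊆ powA A (m + n + 1) * A :=
            Set.mul_subset_mul_right ih
        _ = powA A (m + (n+1) + 1) := by rw [show m + (n+1) + 1 = (m + n + 1) + 1 by omega]; rfl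

lemma closure_eq_iUnion_powA {G : Type*} [Semigroup G] (A : Set G) :
    ((Subsemigroup.closure A : Subsemigroup G) : Set G) = ⋃ n, powA A n := by
  apply le_antisymm
  · have : (⋃ n, powA A n) ∈ {s : Set G | ∀ x ∈ s, ∀ y ∈ s, x * y ∈ s} := by
      intro x hx y hy
      obtain ⟨m, hm⟩ := Set.mem_iUnion.mp hx
      obtain ⟨n, hn⟩ := Set.mem_iUnion.mp hy
      exact Set.mem_iUnion.mpr ⟨m + n + 1, powA_mul A m n ⟨x, hm, y, hn, rfl⟩⟩
    let T : Subsemigroup G := ⟨⋃ n, powA A n, fun {a b} ha hb => this a ha b hb⟩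
    have hsub : A ⊆ (T : Set G) := fun a ha => Set.mem_iUnion.mpr ⟨0, ha⟩
    exact Subsemigroup.closure_le.mpr hsub
  · refine Set.iUnion_subset fun n => ?_
    induction n with
    | zero => exact Subsemigroup.subset_closure
    | succ n ih =>
        rintro _ ⟨x, hx, a, ha, rfl⟩
        exact Subsemigroup.mul_mem _ (ih hx) (Subsemigroup.subset_closure ha)

/-- the subsemigroup generated by an `S`-subset is an `S`-subset,
and the ideal generated by it, `X ∪ G·X ∪ X·G ∪ G·X·G`, is an `S`-subset. -/
theorem generated_subsemigroup_and_ideal_are_SUnions {G : Type*} [Semigroup G]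
    (S : Set (Set G)) (hS : IsSchurRing S) (A : Set G) (hA : IsSUnion S A) :
    IsSUnion S ((Subsemigroup.closure A : Subsemigroup G) : Set G) ∧
    IsSUnion S (A ∪ Set.univ * A ∪ A * Set.univ ∪ Set.univ * A * Set.univ) := by
  constructor
  · rw [closure_eq_iUnion_powA]
    apply sUnion_iUnion
    intro n
    induction n with
    | zero => exact hA
    | succ n ih => exact sUnion_mul S hS ih hA
  · exact sUnion_union S (sUnion_union S (sUnion_union S hA
      (sUnion_mul S hS (sUnion_univ S) hA)) (sUnion_mul S hS hA (sUnion_univ S)))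
      (sUnion_mul S hS (sUnion_mul S hS (sUnion_univ S) hA) (sUnion_univ S))
end

section
/- Let G be a semigroup, let 𝒮 be a Schur ring over G, and let H be a subsemigroup of G that is an 𝒮-subset. Then the collection of blocks of 𝒮 that are contained in H, viewed as a partition of H, is a Schur ring over the semigroup H. -/
open scoped Pointwise

lemma simpleQty_apply_of_mem {G : Type*} [Mul G] {X : Finset G} {g : G} (h : g ∈ X) :
    (simpleQty X).coeff g = 1 := by
  classical
  rw [simpleQty, MonoidAlgebra.coeff_sum, Finsupp.finset_sum_apply]
  rw [Finset.sum_eq_single_of_mem g h]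
  · simp [MonoidAlgebra.coeff_single, Finsupp.single_apply]
  · intro b _ hb
    simp [MonoidAlgebra.coeff_single, Finsupp.single_apply, hb]

lemma simpleQty_apply_of_not_mem {G : Type*} [Mul G] {X : Finset G} {g : G} (h : g ∉ X) :
    (simpleQty X).coeff g = 0 := by
  classical
  rw [simpleQty, MonoidAlgebra.coeff_sum, Finsupp.finset_sum_apply]
  apply Finset.sum_eq_zero
  intro b hb
  have : b ≠ g := fun e => h (e ▸ hb)
  simp [MonoidAlgebra.coeff_single, Finsupp.single_apply, this]

lemma simpleQty_support {G : Type*} [Mul G] (X : Finset G) :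
    (simpleQty X).coeff.support = X := by
  ext g
  by_cases h : g ∈ X
  · simp [Finsupp.mem_support_iff, simpleQty_apply_of_mem h, h]
  · simp [Finsupp.mem_support_iff, simpleQty_apply_of_not_mem h, h]

lemma mapDomain_simpleQty_pre {G : Type*} [Semigroup G] (H : Subsemigroup G)
    (C : Set G) (hC : C.Finite) (hCH : C ⊆ (H : Set G))
    (hC' : (Subtype.val ⁻¹' C : Set H).Finite) :
    MonoidAlgebra.mapDomain (Subtype.val : H → G) (simpleQty hC'.toFinset)
      = simpleQty hC.toFinset := by
  classical
  have himg : hC'.toFinset.image (Subtype.val : H → G) = hC.toFinset := by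
    ext g
    simp only [Finset.mem_image, Set.Finite.mem_toFinset, Set.mem_preimage]
    constructor
    · rintro ⟨b, hb, rfl⟩; exact hb
    · intro hg; exact ⟨⟨g, hCH hg⟩, hg, rfl⟩
  apply MonoidAlgebra.coeff_injective
  simp only [MonoidAlgebra.coeff_mapDomain, simpleQty, MonoidAlgebra.coeff_sum,
    MonoidAlgebra.coeff_single]
  rw [Finsupp.mapDomain_finset_sum]
  simp only [Finsupp.mapDomain_single]
  rw [← himg,
    Finset.sum_image (fun a _ b _ h => Subtype.val_injective h)]

/-- the blocks of a Schur ring contained in an `S`-subsemigroup `H`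
form a Schur ring over `H`. -/
theorem schur_subring {G : Type*} [Semigroup G] (S : Set (Set G)) (hS : IsSchurRing S)
    (H : Subsemigroup G) (hH : IsSUnion S (H : Set G)) :
    IsSchurRing { B : Set H | ∃ X ∈ S, X ⊆ (H : Set G) ∧ B = Subtype.val ⁻¹' X } := by
  classical
  obtain ⟨⟨hblocks, huniq⟩, hmul⟩ := hS
  have hval : Function.Injective (Subtype.val : H → G) := Subtype.val_injective
  constructor
  · constructor
    · rintro B ⟨X, hX, hXH, rfl⟩
      obtain ⟨⟨x, hx⟩, hfin⟩ := hblocks X hX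
      exact ⟨⟨⟨x, hXH hx⟩, hx⟩, hfin.preimage hval.injOn⟩
    · intro h
      obtain ⟨X, ⟨hX, hhX⟩, hXuniq⟩ := huniq (h : G)
      have hXH : X ⊆ (H : Set G) := by
        rcases hH X hX with h1 | h1
        · exact h1
        · exact absurd (Set.mem_inter hhX h.2) (by simp [h1])
      refine ⟨Subtype.val ⁻¹' X, ⟨⟨X, hX, hXH, rfl⟩, hhX⟩, ?_⟩
      rintro B ⟨⟨Y, hY, hYH, rfl⟩, hhY⟩
      rw [hXuniq Y ⟨hY, hhY⟩]
  · rintro B ⟨X, hX, hXH, rfl⟩ B' ⟨Y, hY, hYH, rfl⟩ hB hB'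
    have hXf : X.Finite := (hblocks X hX).2
    have hYf : Y.Finite := (hblocks Y hY).2
    set f : MonoidAlgebra ℚ H → MonoidAlgebra ℚ G :=
      MonoidAlgebra.mapDomain (Subtype.val : H → G) with hf
    have hfinj : Function.Injective f := MonoidAlgebra.mapDomain_injective hval
    have hfB : f (simpleQty hB.toFinset) = simpleQty hXf.toFinset :=
      mapDomain_simpleQty_pre H X hXf hXH hB
    have hfB' : f (simpleQty hB'.toFinset) = simpleQty hYf.toFinset :=
      mapDomain_simpleQty_pre H Y hYf hYH hB'
    have hfmul : f (simpleQty hB.toFinset * simpleQty hB'.toFinset)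
        = simpleQty hXf.toFinset * simpleQty hYf.toFinset := by
      rw [hf]
      exact (MonoidAlgebra.mapDomain_mul (MulMemClass.subtype H) _ _).trans
        (by show f _ * f _ = _; rw [hfB, hfB'])
    have hP := hmul X hX Y hY hXf hYf
    -- support of the product lies in H
    have hPsupp : ∀ g ∈ (simpleQty hXf.toFinset * simpleQty hYf.toFinset).coeff.support,
        g ∈ (H : Set G) := by
      intro g hg
      have := MonoidAlgebra.support_coeff_mul_subset (simpleQty hXf.toFinset) (simpleQty hYf.toFinset) hg
      rw [simpleQty_support, simpleQty_support] at this
      obtain ⟨x, hx, y, hy, rfl⟩ := Finset.mem_mul.1 this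
      exact H.mul_mem (hXH (hXf.mem_toFinset.1 hx)) (hYH (hYf.mem_toFinset.1 hy))
    obtain ⟨c, hc_supp, hc_sum⟩ := Submodule.mem_span_set.1 hP
    have hrep : ∀ z ∈ c.support, ∃ C, C ∈ S ∧ ∃ hC : C.Finite, z = simpleQty hC.toFinset :=
      fun z hz => by obtain ⟨C, hC, hCf, rfl⟩ := hc_supp hz; exact ⟨C, hC, hCf, rfl⟩
    choose Cb hCbS hCbf hCbz using hrep
    have heval : ∀ (z) (hz : z ∈ c.support), ∀ g ∈ Cb z hz,
        (simpleQty hXf.toFinset * simpleQty hYf.toFinset).coeff g = c z := by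
      intro z hz g hg
      have h1 : (simpleQty hXf.toFinset * simpleQty hYf.toFinset).coeff g
          = ∑ z' ∈ c.support, c z' * z'.coeff g := by
        rw [← hc_sum, Finsupp.sum, MonoidAlgebra.coeff_sum, Finsupp.finset_sum_apply]
        refine Finset.sum_congr rfl fun z' _ => ?_
        rw [MonoidAlgebra.coeff_smul, Finsupp.smul_apply, smul_eq_mul]
      rw [h1, Finset.sum_eq_single_of_mem z hz]
      · rw [hCbz z hz, simpleQty_apply_of_mem ((hCbf z hz).mem_toFinset.2 hg), mul_one]
      · intro z' hz' hne
        have hgC : g ∉ Cb z' hz' := by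
          intro hg'
          apply hne
          have hCeq : Cb z' hz' = Cb z hz :=
            (huniq g).unique ⟨hCbS z' hz', hg'⟩ ⟨hCbS z hz, hg⟩
          rw [hCbz z' hz', hCbz z hz]
          congr 1
          ext x
          simp [Set.Finite.mem_toFinset, hCeq]
        rw [hCbz z' hz',
          simpleQty_apply_of_not_mem (fun h => hgC ((hCbf z' hz').mem_toFinset.1 h)), mul_zero]
    have hCH : ∀ (z) (hz : z ∈ c.support), Cb z hz ⊆ (H : Set G) := by
      intro z hz
      obtain ⟨g, hg⟩ := (hblocks _ (hCbS z hz)).1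
      have hgP : g ∈ (simpleQty hXf.toFinset * simpleQty hYf.toFinset).coeff.support := by
        rw [Finsupp.mem_support_iff, heval z hz g hg]
        exact Finsupp.mem_support_iff.1 hz
      rcases hH _ (hCbS z hz) with h1 | h1
      · exact h1
      · exact absurd (Set.mem_inter hg (hPsupp g hgP)) (by simp [h1])
    have hDf : ∀ (z) (hz : z ∈ c.support),
        (Subtype.val ⁻¹' Cb z hz : Set H).Finite :=
      fun z hz => (hCbf z hz).preimage hval.injOn
    have hPw : simpleQty hB.toFinset * simpleQty hB'.toFinset
        = ∑ t ∈ c.support.attach, c t.1 • simpleQty (hDf t.1 t.2).toFinset := by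
      apply hfinj
      rw [hfmul]
      have hmap : f (∑ t ∈ c.support.attach, c t.1 • simpleQty (hDf t.1 t.2).toFinset)
          = ∑ t ∈ c.support.attach, c t.1 • (t.1 : MonoidAlgebra ℚ G) := by
        rw [hf]
        apply MonoidAlgebra.coeff_injective
        simp only [MonoidAlgebra.coeff_mapDomain, MonoidAlgebra.coeff_sum, MonoidAlgebra.coeff_smul]
        rw [Finsupp.mapDomain_finset_sum]
        refine Finset.sum_congr rfl fun t _ => ?_
        rw [Finsupp.mapDomain_smul, ← MonoidAlgebra.coeff_mapDomain,
          mapDomain_simpleQty_pre H _ (hCbf t.1 t.2) (hCH t.1 t.2) (hDf t.1 t.2),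
          ← hCbz t.1 t.2]
      rw [hmap, ← hc_sum, Finsupp.sum, ← Finset.sum_attach]
    rw [hPw]
    apply Submodule.sum_mem
    intro t _
    apply Submodule.smul_mem
    apply Submodule.subset_span
    exact ⟨Subtype.val ⁻¹' Cb t.1 t.2,
      ⟨Cb t.1 t.2, hCbS t.1 t.2, hCH t.1 t.2, rfl⟩, hDf t.1 t.2, rfl⟩
end

section
/- Let G be a monoid with identity 1 and let 𝒮 be a Schur ring over G (regarded as a semigroup). Let E be the block of 𝒮 containing 1, and suppose E ≠ {1}. Then the partition of G obtained from 𝒮 by replacing the block E with the two blocks {1} and E \ {1} is again a Schur ring over G. -/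
open scoped Pointwise

lemma simpleQty_one {G : Type*} [Monoid G] (h : ({(1:G)} : Set G).Finite) :
    simpleQty h.toFinset = (1 : MonoidAlgebra ℚ G) := by
  have ht : h.toFinset = {1} := by ext x; simp
  rw [ht, simpleQty, Finset.sum_singleton, MonoidAlgebra.one_def]

lemma simpleQty_diff_one {G : Type*} [Monoid G] {E : Set G} (hE : E.Finite) (h1 : (1:G) ∈ E)
    (h : (E \ {1}).Finite) :
    simpleQty h.toFinset = simpleQty hE.toFinset - 1 := by
  classical
  have ht : h.toFinset = hE.toFinset.erase 1 := by
    ext x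
    simp only [Set.Finite.mem_toFinset, Set.mem_diff, Set.mem_singleton_iff, Finset.mem_erase]
    tauto
  have h1' : (1:G) ∈ hE.toFinset := by simpa using h1
  rw [ht, simpleQty, simpleQty, MonoidAlgebra.one_def]
  exact eq_sub_of_add_eq (Finset.sum_erase_add _ _ h1')

/-- splitting off the identity of a monoid from its block
yields again a Schur ring. -/
theorem split_identity_schur {G : Type*} [Monoid G] (S : Set (Set G)) (hS : IsSchurRing S)
    (E : Set G) (hE : E ∈ S) (h1 : (1 : G) ∈ E) (hne : E ≠ {1}) :
    IsSchurRing ((S \ {E}) ∪ {({(1 : G)} : Set G), E \ {1}}) := by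
  obtain ⟨⟨hblocks, huniq⟩, hmul⟩ := hS
  have hEfin : E.Finite := (hblocks E hE).2
  set S' := (S \ {E}) ∪ {({(1 : G)} : Set G), E \ {1}} with hS'def
  have hmemS' : ∀ X : Set G, X ∈ S' ↔ (X ∈ S ∧ X ≠ E) ∨ X = {1} ∨ X = E \ {1} := by
    intro X
    simp only [hS'def, Set.mem_union, Set.mem_diff, Set.mem_insert_iff, Set.mem_singleton_iff]
  have hone_not : ∀ B ∈ S, B ≠ E → (1:G) ∉ B := by
    intro B hB hBE h1B
    exact hBE ((huniq 1).unique ⟨hB, h1B⟩ ⟨hE, h1⟩)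
  -- partition
  have hpart : IsPartition S' := by
    constructor
    · intro X hX
      rcases (hmemS' X).1 hX with ⟨hXS, _⟩ | rfl | rfl
      · exact hblocks X hXS
      · exact ⟨⟨1, rfl⟩, Set.finite_singleton 1⟩
      · refine ⟨?_, hEfin.diff⟩
        rw [Set.diff_nonempty]
        intro hsub
        exact hne (subset_antisymm hsub (by simpa using h1))
    · intro x
      by_cases hx1 : x = 1
      · subst hx1
        refine ⟨{1}, ⟨(hmemS' _).2 (Or.inr (Or.inl rfl)), rfl⟩, ?_⟩
        rintro Y ⟨hY, h1Y⟩
        rcases (hmemS' Y).1 hY with ⟨hYS, hYE⟩ | rfl | rfl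
        · exact absurd h1Y (hone_not Y hYS hYE)
        · rfl
        · exact absurd h1Y (by simp)
      · by_cases hxE : x ∈ E
        · refine ⟨E \ {1}, ⟨(hmemS' _).2 (Or.inr (Or.inr rfl)), ⟨hxE, hx1⟩⟩, ?_⟩
          rintro Y ⟨hY, hxY⟩
          rcases (hmemS' Y).1 hY with ⟨hYS, hYE⟩ | rfl | rfl
          · exact absurd ((huniq x).unique ⟨hYS, hxY⟩ ⟨hE, hxE⟩) hYE
          · exact absurd (Set.mem_singleton_iff.mp hxY) hx1
          · rfl
        · obtain ⟨B, ⟨hBS, hxB⟩, hBu⟩ := huniq x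
          have hBE : B ≠ E := fun h => hxE (h ▸ hxB)
          refine ⟨B, ⟨(hmemS' _).2 (Or.inl ⟨hBS, hBE⟩), hxB⟩, ?_⟩
          rintro Y ⟨hY, hxY⟩
          rcases (hmemS' Y).1 hY with ⟨hYS, _⟩ | rfl | rfl
          · exact hBu Y ⟨hYS, hxY⟩
          · exact absurd (Set.mem_singleton_iff.mp hxY) hx1
          · exact absurd hxY.1 hxE
  -- span facts
  have h1span : (1 : MonoidAlgebra ℚ G) ∈ schurSpan S' :=
    Submodule.subset_span ⟨{1}, (hmemS' _).2 (Or.inr (Or.inl rfl)),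
      Set.finite_singleton 1, (simpleQty_one _).symm⟩
  have hdiffspan : simpleQty (hEfin.diff (t := {1})).toFinset ∈ schurSpan S' :=
    Submodule.subset_span ⟨E \ {1}, (hmemS' _).2 (Or.inr (Or.inr rfl)), hEfin.diff (t := {1}), rfl⟩
  have hspan_le : schurSpan S ≤ schurSpan S' := by
    rw [schurSpan, Submodule.span_le]
    rintro z ⟨X, hX, hXfin, rfl⟩
    by_cases hXE : X = E
    · subst hXE
      have key : simpleQty hXfin.toFinset = simpleQty (hEfin.diff (t := {1})).toFinset + 1 := by
        rw [simpleQty_diff_one hEfin h1 (hEfin.diff (t := {1})), sub_add_cancel]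
      rw [SetLike.mem_coe, key]
      exact add_mem hdiffspan h1span
    · exact Submodule.subset_span ⟨X, (hmemS' X).2 (Or.inl ⟨hX, hXE⟩), hXfin, rfl⟩
  have hmulS : ∀ a ∈ schurSpan S, ∀ b ∈ schurSpan S, a * b ∈ schurSpan S := by
    have hle : schurSpan S * schurSpan S ≤ schurSpan S := by
      rw [schurSpan, Submodule.span_mul_span, Submodule.span_le]
      rintro z hz
      rw [Set.mem_mul] at hz
      obtain ⟨x, hx, y, hy, rfl⟩ := hz
      obtain ⟨X, hX, hXf, rfl⟩ := hx
      obtain ⟨Y, hY, hYf, rfl⟩ := hy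
      exact hmul X hX Y hY hXf hYf
    intro a ha b hb
    exact hle (Submodule.mul_mem_mul ha hb)
  have hrep : ∀ X ∈ S', ∀ hX : X.Finite, ∃ b ∈ schurSpan S, ∃ c : ℚ,
      simpleQty hX.toFinset = b + c • (1 : MonoidAlgebra ℚ G) := by
    intro X hX hXf
    rcases (hmemS' X).1 hX with ⟨hXS, _⟩ | rfl | rfl
    · exact ⟨_, Submodule.subset_span ⟨X, hXS, hXf, rfl⟩, 0, by simp⟩
    · exact ⟨0, zero_mem _, 1, by rw [simpleQty_one hXf, zero_add, one_smul]⟩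
    · refine ⟨simpleQty hEfin.toFinset, Submodule.subset_span ⟨E, hE, hEfin, rfl⟩, -1, ?_⟩
      rw [simpleQty_diff_one hEfin h1 hXf, neg_one_smul, sub_eq_add_neg]
  refine ⟨hpart, ?_⟩
  intro X hX Y hY hXf hYf
  obtain ⟨b1, hb1, c1, e1⟩ := hrep X hX hXf
  obtain ⟨b2, hb2, c2, e2⟩ := hrep Y hY hYf
  rw [e1, e2]
  have expand : (b1 + c1 • 1) * (b2 + c2 • 1) =
      b1 * b2 + c2 • b1 + c1 • b2 + (c2 * c1) • (1 : MonoidAlgebra ℚ G) := by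
    simp only [add_mul, mul_add, smul_mul_assoc, mul_smul_comm, one_mul, mul_one, smul_smul,
      smul_add]
    abel
  rw [expand]
  exact add_mem (add_mem (add_mem (hspan_le (hmulS _ hb1 _ hb2))
    (Submodule.smul_mem _ _ (hspan_le hb1)))
    (Submodule.smul_mem _ _ (hspan_le hb2)))
    (Submodule.smul_mem _ _ h1span)
end

section
/- Let G be a semigroup possessing a zero element θ, i.e., θ*x = θ and x*θ = θ for all x ∈ G. If 𝒮 is a Schur ring over G, then {θ} is a block of 𝒮. -/
open scoped Pointwise

/-- in a semigroup with a zero element `θ`, the singleton `{θ}`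
is a block of every Schur ring. -/
theorem zero_is_singleton_block {G : Type*} [Semigroup G] (θ : G)
    (hθ : ∀ x : G, θ * x = θ ∧ x * θ = θ)
    (S : Set (Set G)) (hS : IsSchurRing S) :
    ({θ} : Set G) ∈ S := by
  classical
  obtain ⟨⟨hne, huniq⟩, hmul⟩ := hS
  obtain ⟨X, ⟨hXS, hθX⟩, hXuniq⟩ := huniq θ
  obtain ⟨hXne, hXfin⟩ := hne X hXS
  set Xf := hXfin.toFinset with hXfdef
  have hθXf : θ ∈ Xf := hXfin.mem_toFinset.mpr hθX
  set n : ℕ := Xf.card with hndef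
  have hn1 : 1 ≤ n := Finset.card_pos.mpr ⟨θ, hθXf⟩
  have hp : simpleQty Xf * simpleQty Xf ∈ schurSpan S := hmul X hXS X hXS hXfin hXfin
  set p := simpleQty Xf * simpleQty Xf with hpdef
  -- coefficient formula
  have hcoef : ∀ g : G, p.coeff g = ∑ x ∈ Xf, ∑ y ∈ Xf, if x * y = g then (1:ℚ) else 0 := by
    intro g
    rw [hpdef, simpleQty, Finset.sum_mul_sum]
    rw [MonoidAlgebra.coeff_sum, Finset.sum_apply']
    refine Finset.sum_congr rfl fun x _ => ?_
    rw [MonoidAlgebra.coeff_sum, Finset.sum_apply']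
    refine Finset.sum_congr rfl fun y _ => ?_
    rw [MonoidAlgebra.single_mul_single, one_mul, MonoidAlgebra.coeff_single]
    exact Finsupp.single_apply
  -- values of simpleQty
  have hval : ∀ (D : Finset G) (g : G),
      (simpleQty D).coeff g = if g ∈ D then (1:ℚ) else 0 := by
    intro D g
    rw [simpleQty, MonoidAlgebra.coeff_sum, Finset.sum_apply']
    simp only [MonoidAlgebra.coeff_single, Finsupp.single_apply]
    exact Finset.sum_ite_eq' D g (fun _ => (1:ℚ))
  -- elements of span are constant on blocks
  have hconst : ∀ z ∈ schurSpan S, ∀ g ∈ X, ∀ g' ∈ X, z.coeff g = z.coeff g' := by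
    intro z hz g hg g' hg'
    induction hz using Submodule.span_induction with
    | mem w hw =>
      obtain ⟨D, hDS, hDfin, rfl⟩ := hw
      rw [hval, hval]
      have : g ∈ D ↔ g' ∈ D := by
        constructor
        · intro h
          obtain ⟨B, -, hB⟩ := huniq g
          have h1 : D = B := hB D ⟨hDS, h⟩
          have h2 : X = B := hB X ⟨hXS, hg⟩
          rw [h1, ← h2]; exact hg'
        · intro h
          obtain ⟨B, -, hB⟩ := huniq g'
          have h1 : D = B := hB D ⟨hDS, h⟩
          have h2 : X = B := hB X ⟨hXS, hg'⟩
          rw [h1, ← h2]; exact hg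
      simp only [hDfin.mem_toFinset]
      by_cases h : g ∈ D
      · rw [if_pos h, if_pos (this.mp h)]
      · rw [if_neg h, if_neg (fun h' => h (this.mpr h'))]
    | zero => simp
    | add u v _ _ hu hv => rw [MonoidAlgebra.coeff_add, Finsupp.add_apply, Finsupp.add_apply, hu, hv]
    | smul a u _ hu => rw [MonoidAlgebra.coeff_smul_apply, MonoidAlgebra.coeff_smul_apply, hu]
  -- nonnegativity
  have hnonneg : ∀ g : G, 0 ≤ p.coeff g := by
    intro g
    rw [hcoef]
    refine Finset.sum_nonneg fun x _ => Finset.sum_nonneg fun y _ => ?_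
    positivity
  -- lower bound at θ
  have h1 : 2 * (n:ℚ) - 1 ≤ p.coeff θ := by
    rw [hcoef]
    have hbound : ∀ x ∈ Xf, (1 + if x = θ then (n:ℚ) - 1 else 0)
        ≤ ∑ y ∈ Xf, if x * y = θ then (1:ℚ) else 0 := by
      intro x hx
      by_cases hxt : x = θ
      · rw [if_pos hxt]
        have heq : ∀ y ∈ Xf, (if x * y = θ then (1:ℚ) else 0) = 1 := by
          intro y _
          rw [if_pos (by rw [hxt]; exact (hθ y).1)]
        rw [Finset.sum_congr rfl heq, Finset.sum_const, nsmul_eq_mul, mul_one]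
        linarith
      · rw [if_neg hxt, add_zero]
        have hkey := Finset.single_le_sum (f := fun y => if x * y = θ then (1:ℚ) else 0)
          (fun y _ => by positivity) hθXf
        simpa [(hθ x).2] using hkey
    calc 2 * (n:ℚ) - 1 = ∑ x ∈ Xf, (1 + if x = θ then (n:ℚ) - 1 else 0) := by
          rw [Finset.sum_add_distrib, Finset.sum_const, Finset.sum_ite_eq' Xf θ,
            if_pos hθXf, nsmul_eq_mul, mul_one]
          ring
      _ ≤ _ := Finset.sum_le_sum hbound
  -- upper bound on total on Xf
  have h2 : ∑ g ∈ Xf, p.coeff g ≤ (n:ℚ) * n := by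
    calc ∑ g ∈ Xf, p.coeff g
        = ∑ x ∈ Xf, ∑ y ∈ Xf, ∑ g ∈ Xf, if x * y = g then (1:ℚ) else 0 := by
          rw [Finset.sum_congr rfl fun g _ => hcoef g]
          rw [Finset.sum_comm]
          exact Finset.sum_congr rfl fun x _ => Finset.sum_comm
      _ ≤ ∑ x ∈ Xf, ∑ y ∈ Xf, (1:ℚ) := by
          refine Finset.sum_le_sum fun x _ => Finset.sum_le_sum fun y _ => ?_
          rw [Finset.sum_ite_eq Xf (x*y) (fun _ => (1:ℚ))]
          split <;> norm_num
      _ = (n:ℚ) * n := by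
          simp [mul_comm, hndef]
  -- all coefficients on Xf equal p.coeff θ
  have h3 : ∑ g ∈ Xf, p.coeff g = (n:ℚ) * p.coeff θ := by
    rw [Finset.sum_congr rfl fun g hg =>
      hconst p hp g (hXfin.mem_toFinset.mp hg) θ hθX]
    rw [Finset.sum_const, nsmul_eq_mul]
  -- conclude n = 1
  have hn : n = 1 := by
    have hnQ : (1:ℚ) ≤ n := by exact_mod_cast hn1
    have : (n:ℚ) * (2 * n - 1) ≤ (n:ℚ) * n := by
      calc (n:ℚ) * (2 * n - 1) ≤ (n:ℚ) * p.coeff θ := by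
            apply mul_le_mul_of_nonneg_left h1 (by linarith)
        _ = ∑ g ∈ Xf, p.coeff g := h3.symm
        _ ≤ (n:ℚ) * n := h2
    have hle : (n:ℚ) ≤ 1 := by nlinarith
    have : (n:ℚ) = 1 := le_antisymm hle hnQ
    exact_mod_cast this
  -- X = {θ}
  obtain ⟨a, ha⟩ := Finset.card_eq_one.mp hn
  have haθ : a = θ := by
    have := hθXf
    rw [ha, Finset.mem_singleton] at this
    exact this.symm
  have hX : X = {θ} := by
    have : (Xf : Set G) = X := hXfin.coe_toFinset
    rw [← this, ha, haθ, Finset.coe_singleton]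
  rwa [hX] at hXS
end
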